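/- arXiv:2507.21623 — 5 statements merged into one kernel-verified Lean document; each statement's English description precedes it below -/
import Mathlib

section
/- Let F be an algebraically closed field and G a finite group with |G| invertible in F. If ρ is an irreducible representation of G over F of dimension d with character χ, then the element e(ρ) = (d/|G|) · Σ_{g∈G} χ(g⁻¹)·g is an idempotent in the group algebra F[G]. -/
open scoped BigOperators

namespace GroupCodeHulls

variable {K : Type*} [Field K] {G : Type*} [Group G]

/-- A (matrix) representation of `G` over `K` of degree `d`. -/
abbrev MatRep (K : Type*) [Field K] (G : Type*) [Group G] (d : ℕ) : Type _ :=
  G →* (Matrix (Fin d) (Fin d) K)ˣ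

/-- A subspace `W ⊆ K^d` is invariant under the representation `ρ`. -/
def IsInvariant {d : ℕ} (ρ : MatRep K G d) (W : Submodule K (Fin d → K)) : Prop :=
  ∀ g : G, ∀ x ∈ W, (ρ g : Matrix (Fin d) (Fin d) K).mulVec x ∈ W

/-- `ρ` is an irreducible representation. -/
def IsIrreducible {d : ℕ} (ρ : MatRep K G d) : Prop :=
  0 < d ∧ ∀ W : Submodule K (Fin d → K), IsInvariant ρ W → W = ⊥ ∨ W = ⊤

/-- Two representations are isomorphic. -/
def IsoRep {d₁ d₂ : ℕ} (ρ₁ : MatRep K G d₁) (ρ₂ : MatRep K G d₂) : Prop :=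
  ∃ T : (Fin d₁ → K) ≃ₗ[K] (Fin d₂ → K),
    ∀ (g : G) (x : Fin d₁ → K),
      T ((ρ₁ g : Matrix (Fin d₁) (Fin d₁) K).mulVec x)
        = (ρ₂ g : Matrix (Fin d₂) (Fin d₂) K).mulVec (T x)

/-- The character of a representation. -/
noncomputable def charOf {d : ℕ} (ρ : MatRep K G d) (g : G) : K :=
  Matrix.trace (ρ g : Matrix (Fin d) (Fin d) K)

/-- The element `e(ρ) = (d/|G|) ∑_g χ_ρ(g⁻¹) g` of the group algebra. -/
noncomputable def repIdem [Fintype G] {d : ℕ} (ρ : MatRep K G d) : MonoidAlgebra K G :=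
  ∑ g : G, MonoidAlgebra.single g ((d : K) * (Fintype.card G : K)⁻¹ * charOf ρ g⁻¹)

/-- The "transpose-inverse" of an invertible matrix, as a unit. -/
def contraUnit {n : Type*} [Fintype n] [DecidableEq n] (u : (Matrix n n K)ˣ) :
    (Matrix n n K)ˣ where
  val := Matrix.transpose (↑u⁻¹ : Matrix n n K)
  inv := Matrix.transpose (↑u : Matrix n n K)
  val_inv := by
    rw [← Matrix.transpose_mul, ← Units.val_mul, mul_inv_cancel, Units.val_one,
      Matrix.transpose_one]
  inv_val := by
    rw [← Matrix.transpose_mul, ← Units.val_mul, inv_mul_cancel, Units.val_one,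
      Matrix.transpose_one]

/-- The contragredient representation `g ↦ ᵀρ(g)⁻¹`. -/
def contra {d : ℕ} (ρ : MatRep K G d) : MatRep K G d where
  toFun g := contraUnit (ρ g)
  map_one' := by
    ext
    simp [contraUnit]
  map_mul' g h := by
    ext
    simp [contraUnit, mul_inv_rev, Matrix.transpose_mul]

/-- The Galois twist `σ ∘ ρ` of a representation. -/
def galConj {k : Type*} [Field k] [Algebra k K] (σ : K ≃ₐ[k] K) {d : ℕ}
    (ρ : MatRep K G d) : MatRep K G d :=
  (Units.map (AlgEquiv.mapMatrix σ :
      Matrix (Fin d) (Fin d) K ≃ₐ[k] Matrix (Fin d) (Fin d) K)) |>.comp ρ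

/-- `ρ₂` lies in the Galois orbit of (the isomorphism class of) `ρ₁`. -/
def SameOrbit (k : Type*) [Field k] [Algebra k K] {d₁ d₂ : ℕ}
    (ρ₁ : MatRep K G d₁) (ρ₂ : MatRep K G d₂) : Prop :=
  ∃ σ : K ≃ₐ[k] K, IsoRep (galConj σ ρ₁) ρ₂

/-- `τ 0, …, τ (s-1)` is a complete irredundant system of representatives of
the Galois orbit `[ρ]`; in particular `s = s(ρ)` is the size of the orbit. -/
def OrbitEnum (k : Type*) [Field k] [Algebra k K] {d : ℕ} (ρ : MatRep K G d)
    (s : ℕ) (τ : Fin s → MatRep K G d) : Prop :=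
  (∀ i, SameOrbit k ρ (τ i)) ∧
  (∀ i j, i ≠ j → ¬ IsoRep (τ i) (τ j)) ∧
  (∀ σ : K ≃ₐ[k] K, ∃ i, IsoRep (galConj σ ρ) (τ i))

/-- The star operation `(∑ f(g) g)* = ∑ f(g⁻¹) g` on the group algebra. -/
def starG (z : MonoidAlgebra K G) : MonoidAlgebra K G :=
  MonoidAlgebra.ofCoeff (Finsupp.equivMapDomain (Equiv.inv G) z.coeff)

/-- The Euclidean inner product on the group algebra with basis `G`. -/
noncomputable def eform [Fintype G] (u v : MonoidAlgebra K G) : K :=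
  ∑ g : G, u.coeff g * v.coeff g

/-- The underlying `K`-subspace of a two-sided ideal of `K[G]`. -/
def codeSub (C : TwoSidedIdeal (MonoidAlgebra K G)) :
    Submodule K (MonoidAlgebra K G) where
  carrier := C
  add_mem' := C.add_mem
  zero_mem' := C.zero_mem
  smul_mem' c x hx := by
    have h : (c • x : MonoidAlgebra K G) = algebraMap K (MonoidAlgebra K G) c * x :=
      Algebra.smul_def c x
    simpa [h] using C.mul_mem_left (algebraMap K (MonoidAlgebra K G) c) x hx

/-- The dual code of a two-sided ideal of `K[G]`, as a `K`-subspace. -/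
noncomputable def dualSub [Fintype G] (C : TwoSidedIdeal (MonoidAlgebra K G)) :
    Submodule K (MonoidAlgebra K G) where
  carrier := {v | ∀ u ∈ C, eform v u = 0}
  add_mem' := by
    intro a b ha hb u hu
    simp only [Set.mem_setOf_eq] at ha hb ⊢
    have h : eform (a + b) u = eform a u + eform b u := by
      unfold eform
      rw [← Finset.sum_add_distrib]
      exact Finset.sum_congr rfl fun g _ => by rw [MonoidAlgebra.coeff_add, Finsupp.add_apply, add_mul]
    rw [h, ha u hu, hb u hu, add_zero]
  zero_mem' := by
    intro u hu
    simp [eform]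
  smul_mem' := by
    intro c x hx u hu
    simp only [Set.mem_setOf_eq] at hx ⊢
    have h : eform (c • x) u = c * eform x u := by
      unfold eform
      rw [Finset.mul_sum]
      exact Finset.sum_congr rfl fun g _ => by
        rw [MonoidAlgebra.coeff_smul, Finsupp.smul_apply, smul_eq_mul, mul_assoc]
    rw [h, hx u hu, mul_zero]

/-- The hull `h(C) = C ∩ C^⊥` of a group code. -/
noncomputable def hullSub [Fintype G] (C : TwoSidedIdeal (MonoidAlgebra K G)) :
    Submodule K (MonoidAlgebra K G) :=
  codeSub C ⊓ dualSub C

/-- The dimension of the hull of a group code. -/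
noncomputable def hullDim [Fintype G] (C : TwoSidedIdeal (MonoidAlgebra K G)) : ℕ :=
  Module.finrank K ↥(hullSub C)

/-! Write `e = c ∑ χ(g⁻¹) g` with `c = d/|G|`; the coefficient of `x` in `e²` is
`c² ∑_g χ(g⁻¹) χ(x⁻¹ g)`. By Schur's lemma the twisted average `∑_g ρ(g⁻¹) A ρ(g)` commutes with
`ρ` and is therefore scalar, and its trace `|G| tr A` identifies the scalar. Applied to the
matrix units this gives `d ∑_g χ(g⁻¹) ρ(g) = |G|`, hence `d ∑_g χ(g⁻¹) χ(x g) = |G| χ(x)`, and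
the coefficient collapses to `c χ(x⁻¹)`. The identities are stated multiplied through by `d`, so
that nothing is ever divided by `d`. -/

open Matrix

theorem _root_.Matrix.mul_single_mul_apply {l m n o R : Type*} [Fintype m] [Fintype n]
    [DecidableEq m] [DecidableEq n] [NonUnitalNonAssocSemiring R]
    (M : Matrix l m R) (N : Matrix n o R) (i : l) (j : o) (k : m) (k' : n) (c : R) :
    (M * single k k' c * N) i j = M i k * c * N k' j := by
  simp [mul_apply, single_apply, ite_and, ite_mul]

theorem _root_.MonoidAlgebra.sum_single_mul_sum_single {R H : Type*} [Semiring R] [Group H]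
    [Fintype H] (a b : H → R) :
    (∑ g, MonoidAlgebra.single g (a g)) * ∑ g, MonoidAlgebra.single g (b g) =
      ∑ x, MonoidAlgebra.single x (∑ g, a g * b (g⁻¹ * x)) := by
  have hshift (g : H) : ∑ h, MonoidAlgebra.single (g * h) (a g * b h) =
      ∑ x, MonoidAlgebra.single x (a g * b (g⁻¹ * x)) :=
    Fintype.sum_equiv (Equiv.mulLeft g) _ _ fun h => by simp
  simp only [Finset.sum_mul_sum, MonoidAlgebra.single_mul_single, hshift]
  rw [Finset.sum_comm]
  exact Finset.sum_congr rfl fun x _ => (map_sum (MonoidAlgebra.singleAddHom x) _ _).symm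

section Schur

variable {d : ℕ}

theorem isInvariant_eigenspace (ρ : MatRep K G d) {M : Matrix (Fin d) (Fin d) K}
    (hM : ∀ g, Commute (ρ g : Matrix (Fin d) (Fin d) K) M) (c : K) :
    IsInvariant ρ (Module.End.eigenspace (toLin' M) c) := by
  intro g x hx
  rw [Module.End.mem_eigenspace_iff, toLin'_apply] at hx ⊢
  rw [mulVec_mulVec, ← (hM g).eq, ← mulVec_mulVec, hx, mulVec_smul]

theorem IsIrreducible.exists_eq_smul_one_of_commute [IsAlgClosed K] {ρ : MatRep K G d}
    (hρ : IsIrreducible ρ) {M : Matrix (Fin d) (Fin d) K}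
    (hM : ∀ g, Commute (ρ g : Matrix (Fin d) (Fin d) K) M) :
    ∃ c : K, M = c • 1 := by
  obtain ⟨hd, hsimple⟩ := hρ
  have : Nonempty (Fin d) := ⟨⟨0, hd⟩⟩
  obtain ⟨c, hc⟩ := Module.End.exists_eigenvalue (toLin' M)
  have htop := (hsimple _ (isInvariant_eigenspace ρ hM c)).resolve_left hc
  refine ⟨c, mulVec_injective (funext fun x => ?_)⟩
  have hx : x ∈ Module.End.eigenspace (toLin' M) c := htop ▸ Submodule.mem_top
  rw [Module.End.mem_eigenspace_iff, toLin'_apply] at hx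
  rw [hx, smul_mulVec, one_mulVec]

end Schur

section Averaging

variable [Fintype G] {d : ℕ}

noncomputable def conjSum (ρ : MatRep K G d) (A : Matrix (Fin d) (Fin d) K) :
    Matrix (Fin d) (Fin d) K :=
  ∑ g, (ρ g⁻¹ : Matrix (Fin d) (Fin d) K) * A * (ρ g : Matrix (Fin d) (Fin d) K)

theorem commute_conjSum (ρ : MatRep K G d) (A : Matrix (Fin d) (Fin d) K) (h : G) :
    Commute (ρ h : Matrix (Fin d) (Fin d) K) (conjSum ρ A) := by
  rw [Commute, SemiconjBy, conjSum, Finset.mul_sum, Finset.sum_mul,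
    ← Equiv.sum_comp (Equiv.mulRight h)]
  refine Finset.sum_congr rfl fun g _ => ?_
  simp only [Equiv.coe_mulRight]
  rw [mul_assoc _ _ (ρ h : Matrix (Fin d) (Fin d) K), ← mul_assoc, ← mul_assoc, ← Units.val_mul,
    ← Units.val_mul, ← map_mul, ← map_mul, _root_.mul_inv_rev, mul_inv_cancel_left]

theorem trace_conjSum (ρ : MatRep K G d) (A : Matrix (Fin d) (Fin d) K) :
    trace (conjSum ρ A) = Fintype.card G * trace A := by
  simp [conjSum, trace_sum, trace_mul_cycle _ A]

theorem conjSum_single_apply (ρ : MatRep K G d) (i j k l : Fin d) :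
    conjSum ρ (single k l 1) i j =
      ∑ g, (ρ g⁻¹ : Matrix (Fin d) (Fin d) K) i k * (ρ g : Matrix (Fin d) (Fin d) K) l j := by
  simp [conjSum, Matrix.sum_apply, mul_single_mul_apply]

variable [IsAlgClosed K] {ρ : MatRep K G d}

theorem IsIrreducible.natCast_smul_conjSum (hρ : IsIrreducible ρ)
    (A : Matrix (Fin d) (Fin d) K) :
    (d : K) • conjSum ρ A = (Fintype.card G * trace A : K) • 1 := by
  obtain ⟨c, hc⟩ := hρ.exists_eq_smul_one_of_commute (commute_conjSum ρ A)
  have htr := trace_conjSum ρ A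
  rw [hc, trace_smul, trace_one, Fintype.card_fin, smul_eq_mul] at htr
  rw [hc, smul_smul, ← htr, mul_comm]

theorem IsIrreducible.natCast_smul_sum_charOf_smul (hρ : IsIrreducible ρ) :
    (d : K) • ∑ g, charOf ρ g⁻¹ • (ρ g : Matrix (Fin d) (Fin d) K) =
      (Fintype.card G : K) • 1 := by
  ext l j
  calc ((d : K) • ∑ g, charOf ρ g⁻¹ • (ρ g : Matrix (Fin d) (Fin d) K)) l j
      = ∑ k, ((d : K) • conjSum ρ (single k l 1)) k j := by
        simp [charOf, trace, Matrix.sum_apply, conjSum_single_apply, Finset.mul_sum,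
          Finset.sum_mul, Finset.sum_comm (γ := G)]
    _ = ∑ k, (((Fintype.card G : K) * trace (single k l 1)) •
          (1 : Matrix (Fin d) (Fin d) K)) k j := by
        simp only [hρ.natCast_smul_conjSum]
    _ = ((Fintype.card G : K) • 1 : Matrix (Fin d) (Fin d) K) l j := by
        rw [Finset.sum_eq_single l (fun k _ hk => by simp [hk]) (by simp)]
        simp

theorem IsIrreducible.natCast_mul_sum_charOf_mul_charOf (hρ : IsIrreducible ρ) (x : G) :
    (d : K) * ∑ g, charOf ρ g⁻¹ * charOf ρ (x * g) = Fintype.card G * charOf ρ x :=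
  calc (d : K) * ∑ g, charOf ρ g⁻¹ * charOf ρ (x * g)
      = trace ((ρ x : Matrix (Fin d) (Fin d) K) *
          ((d : K) • ∑ g, charOf ρ g⁻¹ • (ρ g : Matrix (Fin d) (Fin d) K))) := by
        simp [charOf, trace_sum, Finset.mul_sum]
    _ = Fintype.card G * charOf ρ x := by
        rw [hρ.natCast_smul_sum_charOf_smul, mul_smul_comm, mul_one, trace_smul, charOf,
          smul_eq_mul]

end Averaging

theorem repIdem_isIdempotent_general (F : Type*) [Field F] [IsAlgClosed F] (G : Type*) [Group G]
    [Fintype G] {d : ℕ} (ρ : MatRep F G d)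
    (hirr : IsIrreducible ρ) :
    IsIdempotentElem (repIdem ρ) := by
  rw [IsIdempotentElem, repIdem, MonoidAlgebra.sum_single_mul_sum_single]
  refine Finset.sum_congr rfl fun x _ => congrArg _ ?_
  set n : F := (Fintype.card G : F)
  calc ∑ g, d * n⁻¹ * charOf ρ g⁻¹ * (d * n⁻¹ * charOf ρ (g⁻¹ * x)⁻¹)
      = d * (n⁻¹ * n⁻¹) * (d * ∑ g, charOf ρ g⁻¹ * charOf ρ (x⁻¹ * g)) := by
        simp only [_root_.mul_inv_rev, inv_inv, Finset.mul_sum]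
        exact Finset.sum_congr rfl fun g _ => by ring
    _ = d * (n⁻¹ * n⁻¹) * (n * charOf ρ x⁻¹) := by
        rw [hirr.natCast_mul_sum_charOf_mul_charOf]
    _ = d * n⁻¹ * charOf ρ x⁻¹ := by
        have hn : n⁻¹ * n⁻¹ * n = n⁻¹ := by simpa using mul_self_mul_inv n⁻¹
        linear_combination (d * charOf ρ x⁻¹) * hn

/-- For an irreducible representation `ρ` of `G` over an algebraically closed field `F`
with `|G|` invertible in `F`, the element `e(ρ) = (d/|G|) ∑ χ(g⁻¹) g` is an idempotent. -/
theorem repIdem_isIdempotent (F : Type*) [Field F] [IsAlgClosed F] (G : Type*) [Group G]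
    [Fintype G] (h : IsUnit (Fintype.card G : F)) {d : ℕ} (ρ : MatRep F G d)
    (hirr : IsIrreducible ρ) :
    IsIdempotentElem (repIdem ρ) :=
  repIdem_isIdempotent_general F G ρ hirr

end GroupCodeHulls
end

section
/- Let F_q be a finite field and G a finite group with gcd(|G|, q) = 1. For a group code C = (e) generated by a central idempotent e in F_q[G], the hull h(C) = C ∩ C^⊥ is the two-sided ideal generated by the central idempotent e·(1 − e*). -/
open scoped BigOperators

namespace GroupCodeHulls

variable {K : Type*} [Field K] {G : Type*} [Group G]

/-!
For a central idempotent `f`, membership in the ideal `(f)` is the equation `f x = x`. Since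
`⟨v, a b⟩ = ⟨a* v, b⟩`, a vector is orthogonal to `(e)` exactly when `e* v = 0`. As `*` is an
anti-automorphism, `e*` is again a central idempotent, and for commuting idempotents `e`, `s` the
conditions `e x = x` and `s x = 0` together say `e (1 - s) x = x`.
-/

section CentralIdempotent

variable {R : Type*} [Ring R]

theorem mem_span_central_idempotent_iff {f : R} (hc : ∀ z, Commute f z)
    (hf : IsIdempotentElem f) {x : R} : x ∈ TwoSidedIdeal.span {f} ↔ f * x = x := by
  refine ⟨fun hx => ?_, fun hx => hx ▸ TwoSidedIdeal.mul_mem_right _ f x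
    (TwoSidedIdeal.subset_span rfl)⟩
  let I : TwoSidedIdeal R := .mk' {y | f * y = y} (mul_zero f)
    (fun ha hb => by rw [Set.mem_ofPred_eq, mul_add, ha, hb])
    (fun ha => by rw [Set.mem_ofPred_eq, mul_neg, ha])
    (fun {a b} hb => by rw [Set.mem_ofPred_eq, ← mul_assoc, (hc a).eq, mul_assoc, hb])
    (fun ha => by rw [Set.mem_ofPred_eq, ← mul_assoc, ha])
  have hspan : TwoSidedIdeal.span {f} ≤ I := TwoSidedIdeal.span_le.2 (by simpa [I] using hf.eq)
  simpa [I] using hspan hx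

theorem mul_one_sub_mul_eq_self_iff {e s x : R} (he : IsIdempotentElem e)
    (hs : IsIdempotentElem s) (hes : Commute e s) :
    e * (1 - s) * x = x ↔ e * x = x ∧ s * x = 0 := by
  constructor
  · intro hx
    refine ⟨by rw [← hx, ← mul_assoc, ← mul_assoc, he.eq], ?_⟩
    rw [← hx, ← mul_assoc, ← mul_assoc, ← hes.eq, mul_assoc e s, mul_sub, mul_one, hs.eq,
      sub_self, mul_zero, zero_mul]
  · rintro ⟨hex, hsx⟩
    rw [mul_assoc, sub_mul, one_mul, hsx, sub_zero, hex]

end CentralIdempotent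

section GroupAlgebra

theorem starG_coeff (z : MonoidAlgebra K G) (g : G) : (starG z).coeff g = z.coeff g⁻¹ := rfl

theorem starG_starG (z : MonoidAlgebra K G) : starG (starG z) = z := by
  ext g
  simp [starG_coeff]

variable [Fintype G]

theorem coeff_mul_eq_sum (a b : MonoidAlgebra K G) (x : G) :
    (a * b).coeff x = ∑ g : G, a.coeff g * b.coeff (g⁻¹ * x) := by
  rw [MonoidAlgebra.coeff_mul_apply_left, Finsupp.sum_fintype]
  intro g
  rw [zero_mul]

theorem starG_mul (a b : MonoidAlgebra K G) : starG (a * b) = starG b * starG a := by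
  ext x
  rw [starG_coeff, coeff_mul_eq_sum, coeff_mul_eq_sum]
  refine Fintype.sum_equiv (Equiv.mulLeft x) _ _ fun g => ?_
  simp only [Equiv.coe_mulLeft, starG_coeff, mul_inv_rev, inv_mul_cancel_left, inv_inv]
  rw [mul_comm]

theorem starG_commute {e : MonoidAlgebra K G} (hc : ∀ z, Commute e z) (z : MonoidAlgebra K G) :
    Commute (starG e) z := by
  have h := congrArg starG (hc (starG z)).eq
  rw [starG_mul, starG_mul, starG_starG] at h
  exact h.symm

theorem starG_isIdempotentElem {e : MonoidAlgebra K G} (he : IsIdempotentElem e) :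
    IsIdempotentElem (starG e) := by
  rw [IsIdempotentElem, ← starG_mul, he.eq]

theorem eform_zero_left (u : MonoidAlgebra K G) : eform 0 u = 0 := by
  simp [eform]

theorem eform_mul_right (v a b : MonoidAlgebra K G) :
    eform v (a * b) = eform (starG a * v) b := by
  simp only [eform, coeff_mul_eq_sum, Finset.mul_sum, Finset.sum_mul, starG_coeff]
  rw [← Finset.sum_product', ← Finset.sum_product']
  refine Fintype.sum_equiv
    ⟨fun p => (p.2⁻¹ * p.1, p.2⁻¹), fun p => (p.2⁻¹ * p.1, p.2⁻¹),
      fun p => by simp, fun p => by simp⟩ _ _ fun p => ?_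
  simp only [Equiv.coe_fn_mk, inv_inv, mul_inv_cancel_left]
  ring

theorem mem_dualSub_span_iff {e : MonoidAlgebra K G} (hc : ∀ z, Commute e z)
    (he : IsIdempotentElem e) (v : MonoidAlgebra K G) :
    v ∈ dualSub (TwoSidedIdeal.span {e}) ↔ starG e * v = 0 := by
  change (∀ u ∈ TwoSidedIdeal.span {e}, eform v u = 0) ↔ _
  constructor
  · intro hv
    ext g
    have hmem : e * MonoidAlgebra.single g 1 ∈ TwoSidedIdeal.span {e} :=
      TwoSidedIdeal.mul_mem_right _ e _ (TwoSidedIdeal.subset_span rfl)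
    have h := hv _ hmem
    rw [eform_mul_right] at h
    classical
    simpa [eform, MonoidAlgebra.coeff_single, Finsupp.single_apply] using h
  · intro h u hu
    rw [← (mem_span_central_idempotent_iff hc he).1 hu, eform_mul_right, h, eform_zero_left]

end GroupAlgebra

theorem hull_of_idempotent_code_general (Fq : Type*) [Field Fq] (G : Type*)
    [Group G] [Fintype G]
    (e : MonoidAlgebra Fq G) (hcent : ∀ z, e * z = z * e) (he : IsIdempotentElem e) :
    hullSub (TwoSidedIdeal.span {e})
      = codeSub (TwoSidedIdeal.span {e * (1 - starG e)}) := by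
  have hscent := starG_commute hcent
  have hfcent (z : MonoidAlgebra Fq G) : Commute (e * (1 - starG e)) z :=
    Commute.mul_left (hcent z) ((Commute.one_left z).sub_left (hscent z))
  have hf : IsIdempotentElem (e * (1 - starG e)) :=
    he.mul_of_commute ((Commute.one_right e).sub_right (hscent e).symm)
      (starG_isIdempotentElem he).one_sub
  ext x
  change x ∈ TwoSidedIdeal.span {e} ∧ x ∈ dualSub _ ↔ x ∈ TwoSidedIdeal.span _
  rw [mem_span_central_idempotent_iff hcent he, mem_dualSub_span_iff hcent he,
    mem_span_central_idempotent_iff hfcent hf]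
  exact (mul_one_sub_mul_eq_self_iff he (starG_isIdempotentElem he) (hscent e).symm).symm

/-- For a group code `C = (e)` generated by a central idempotent `e` of `F_q[G]`, the
hull `h(C) = C ∩ C^⊥` is the two-sided ideal generated by the central idempotent
`e·(1 - e*)`. -/
theorem hull_of_idempotent_code (Fq : Type*) [Field Fq] [Fintype Fq] (G : Type*)
    [Group G] [Fintype G] (hco : Nat.Coprime (Fintype.card G) (Fintype.card Fq))
    (e : MonoidAlgebra Fq G) (hcent : ∀ z, e * z = z * e) (he : IsIdempotentElem e) :
    hullSub (TwoSidedIdeal.span {e})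
      = codeSub (TwoSidedIdeal.span {e * (1 - starG e)}) :=
  hull_of_idempotent_code_general Fq G e hcent he

end GroupCodeHulls
end

section
/- Let F_q be a finite field and G a finite group with gcd(|G|, q) = 1. There exists a group code C ⊆ F_q[G] with one-dimensional hull (dim_{F_q}(C ∩ C^⊥) = 1) if and only if gcd(exp(G^{ab}), q − 1) ≥ 3, where G^{ab} is the abelianization of G and exp denotes the exponent. -/
open scoped BigOperators

namespace GroupCodeHulls

variable {K : Type*} [Field K] {G : Type*} [Group G]

/-!
Translation by `g` is adjoint to translation by `g⁻¹` for the Euclidean form, so the hull of a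
group code is stable under left translation. A one-dimensional hull is therefore spanned by a
common eigenvector `v` of all translations, which forces `v = v(1) • ∑ χ(g⁻¹) g` for a linear
character `χ : G → F_qˣ`. Since `v` is self-orthogonal and `⟨v, v⟩ = v(1)² ∑ χ²(g)`, which is
`|G| v(1)² ≠ 0` when `χ² = 1`, we get `χ² ≠ 1`. Conversely, if `χ² ≠ 1` the line spanned by
`∑ χ(g⁻¹) g` is a self-orthogonal two-sided ideal, hence its own hull.

Characters `G → F_qˣ` factor through `G^{ab}`, and their values have orders dividing
`m = gcd(exp G^{ab}, q - 1)`, so `χ² ≠ 1` forces `m ≥ 3`. Conversely, `G^{ab}/(G^{ab})^m` has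
exponent dividing `q - 1`, so its characters into `F_qˣ` separate points, and there the image of
an element of maximal order has order `m ≥ 3`.
-/

open MonoidAlgebra

section GroupAlgebra

variable [Fintype G]

lemma eform_smul_smul (c d : K) (u v : MonoidAlgebra K G) :
    eform (c • u) (d • v) = c * d * eform u v := by
  simp only [eform, coeff_smul_apply, smul_eq_mul, Finset.mul_sum]
  exact Finset.sum_congr rfl fun _ _ => by ring

lemma eform_single_mul (g : G) (r : K) (u v : MonoidAlgebra K G) :
    eform (single g r * u) v = eform u (single g⁻¹ r * v) := by
  simp only [eform, coeff_single_mul_apply, inv_inv]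
  exact Fintype.sum_equiv (Equiv.mulLeft g⁻¹) _ _ fun x => by
    simp only [Equiv.coe_mulLeft, mul_inv_cancel_left]
    ring

lemma single_one_mul_mem_hullSub {C : TwoSidedIdeal (MonoidAlgebra K G)}
    {v : MonoidAlgebra K G} (hv : v ∈ hullSub C) (g : G) : single g (1 : K) * v ∈ hullSub C := by
  obtain ⟨hvC, hvD⟩ := Submodule.mem_inf.mp hv
  refine Submodule.mem_inf.mpr ⟨C.mul_mem_left _ _ hvC, fun u hu => ?_⟩
  rw [eform_single_mul]
  exact hvD _ (C.mul_mem_left _ _ hu)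

noncomputable def charVec (χ : G →* Kˣ) : MonoidAlgebra K G :=
  ∑ g : G, single g (χ g⁻¹ : K)

variable {χ : G →* Kˣ}

lemma coeff_charVec (g : G) : (charVec χ).coeff g = χ g⁻¹ := by
  classical
  simp [charVec, coeff_sum, coeff_single, Finsupp.single_apply]

lemma charVec_ne_zero : charVec χ ≠ 0 := fun h => by
  simpa [h] using coeff_charVec (χ := χ) 1

lemma single_mul_charVec (g : G) (r : K) :
    single g r * charVec χ = (r * χ g) • charVec χ := by
  ext x
  simp only [coeff_single_mul_apply, coeff_smul_apply, coeff_charVec, smul_eq_mul, mul_inv_rev,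
    inv_inv, map_mul, Units.val_mul]
  ring

lemma charVec_mul_single (g : G) (r : K) :
    charVec χ * single g r = (χ g * r) • charVec χ := by
  ext x
  simp only [coeff_mul_single_apply, coeff_smul_apply, coeff_charVec, smul_eq_mul, mul_inv_rev,
    inv_inv, map_mul, Units.val_mul]
  ring

lemma mul_mem_span_charVec (x : MonoidAlgebra K G) {y : MonoidAlgebra K G}
    (hy : y ∈ K ∙ charVec χ) : x * y ∈ K ∙ charVec χ := by
  obtain ⟨c, rfl⟩ := Submodule.mem_span_singleton.mp hy
  rw [mul_smul_comm]
  refine Submodule.smul_mem _ c ?_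
  induction x using MonoidAlgebra.induction_linear with
  | zero => simp
  | add a b ha hb => rw [add_mul]; exact add_mem ha hb
  | single g r =>
    rw [single_mul_charVec]
    exact Submodule.smul_mem _ _ (Submodule.mem_span_singleton_self _)

lemma mem_span_charVec_mul {x : MonoidAlgebra K G} (hx : x ∈ K ∙ charVec χ)
    (y : MonoidAlgebra K G) : x * y ∈ K ∙ charVec χ := by
  obtain ⟨c, rfl⟩ := Submodule.mem_span_singleton.mp hx
  rw [smul_mul_assoc]
  refine Submodule.smul_mem _ c ?_
  induction y using MonoidAlgebra.induction_linear with
  | zero => simp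
  | add a b ha hb => rw [mul_add]; exact add_mem ha hb
  | single g r =>
    rw [charVec_mul_single]
    exact Submodule.smul_mem _ _ (Submodule.mem_span_singleton_self _)

noncomputable def charCode (χ : G →* Kˣ) : TwoSidedIdeal (MonoidAlgebra K G) :=
  TwoSidedIdeal.mk' (K ∙ charVec χ) (zero_mem _) add_mem neg_mem
    (mul_mem_span_charVec _) (mem_span_charVec_mul · _)

lemma mem_charCode {x : MonoidAlgebra K G} : x ∈ charCode χ ↔ x ∈ K ∙ charVec χ :=
  TwoSidedIdeal.mem_mk' ..

lemma codeSub_charCode : codeSub (charCode χ) = K ∙ charVec χ :=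
  Submodule.ext fun _ => mem_charCode

lemma eform_charVec_self : eform (charVec χ) (charVec χ) = ∑ g : G, ((χ ^ 2) g : K) := by
  simp only [eform, coeff_charVec, sq]
  exact Fintype.sum_equiv (Equiv.inv G) _ _ fun _ => rfl

lemma eform_charVec_self_eq_zero (hχ : χ ^ 2 ≠ 1) : eform (charVec χ) (charVec χ) = 0 := by
  rw [eform_charVec_self]
  refine sum_hom_units_eq_zero ((Units.coeHom K).comp (χ ^ 2)) fun h => hχ ?_
  ext g
  exact congr($h g)

lemma hullDim_charCode (hχ : χ ^ 2 ≠ 1) : hullDim (charCode χ) = 1 := by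
  have hself : codeSub (charCode χ) ≤ dualSub (charCode χ) := by
    intro x hx u hu
    rw [codeSub_charCode] at hx
    obtain ⟨a, rfl⟩ := Submodule.mem_span_singleton.mp hx
    obtain ⟨b, rfl⟩ := Submodule.mem_span_singleton.mp (mem_charCode.mp hu)
    rw [eform_smul_smul, eform_charVec_self_eq_zero hχ, mul_zero]
  rw [hullDim, hullSub, inf_eq_left.mpr hself, codeSub_charCode]
  exact finrank_span_singleton charVec_ne_zero

omit [Fintype G] in
lemma exists_monoidHom_single_one_mul_eq_smul {v : MonoidAlgebra K G} (hv : v ≠ 0)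
    (hstable : ∀ g : G, single g (1 : K) * v ∈ K ∙ v) :
    ∃ χ : G →* Kˣ, ∀ g : G, single g (1 : K) * v = (χ g : K) • v := by
  choose c hc using fun g => Submodule.mem_span_singleton.mp (hstable g)
  have hinj : Function.Injective fun a : K => a • v := smul_left_injective K hv
  let χ : G →* K :=
    { toFun := c
      map_one' := hinj <| by simp only [hc, one_smul, ← one_def, one_mul]
      map_mul' := fun g h => hinj <| by
        dsimp only
        rw [hc, ← mul_one (1 : K), ← single_mul_single, mul_assoc, ← hc h, mul_smul_comm, ← hc g,
          smul_smul, mul_comm] }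
  exact ⟨χ.toHomUnits, fun g => (hc g).symm⟩

lemma eq_coeff_one_smul_charVec {v : MonoidAlgebra K G}
    (hχv : ∀ g : G, single g (1 : K) * v = (χ g : K) • v) : v = v.coeff 1 • charVec χ := by
  ext g
  have := congr($(hχv g⁻¹).coeff 1)
  simp only [coeff_single_mul_apply, inv_inv, mul_one, one_mul, coeff_smul_apply,
    smul_eq_mul] at this
  rw [coeff_smul_apply, coeff_charVec, smul_eq_mul, this, mul_comm]

lemma exists_sq_ne_one_of_hullDim_eq_one (hG : (Fintype.card G : K) ≠ 0)
    {C : TwoSidedIdeal (MonoidAlgebra K G)} (hC : hullDim C = 1) :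
    ∃ χ : G →* Kˣ, χ ^ 2 ≠ 1 := by
  obtain ⟨⟨v, hv⟩, hv0, hspan⟩ := finrank_eq_one_iff'.mp hC
  replace hv0 : v ≠ 0 := fun h => hv0 (Subtype.ext h)
  have hstable (g : G) : single g (1 : K) * v ∈ K ∙ v := by
    obtain ⟨c, hc⟩ := hspan ⟨_, single_one_mul_mem_hullSub hv g⟩
    exact Submodule.mem_span_singleton.mpr ⟨c, congr($hc.1)⟩
  obtain ⟨χ, hχv⟩ := exists_monoidHom_single_one_mul_eq_smul hv0 hstable
  refine ⟨χ, fun hχ => ?_⟩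
  have hv1 : v.coeff 1 ≠ 0 := by
    intro h
    rw [eq_coeff_one_smul_charVec hχv, h, zero_smul] at hv0
    exact hv0 rfl
  have hvv : eform v v = 0 := (Submodule.mem_inf.mp hv).2 v (Submodule.mem_inf.mp hv).1
  rw [eq_coeff_one_smul_charVec hχv, eform_smul_smul, eform_charVec_self, hχ] at hvv
  simp [hv1, hG] at hvv

theorem exists_hullDim_eq_one_iff (hG : (Fintype.card G : K) ≠ 0) :
    (∃ C : TwoSidedIdeal (MonoidAlgebra K G), hullDim C = 1) ↔ ∃ χ : G →* Kˣ, χ ^ 2 ≠ 1 :=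
  ⟨fun ⟨_, hC⟩ => exists_sq_ne_one_of_hullDim_eq_one hG hC,
    fun ⟨χ, hχ⟩ => ⟨charCode χ, hullDim_charCode hχ⟩⟩

end GroupAlgebra

section Characters

lemma exists_pow_ne_one_iff_abelianization {M : Type*} [CommGroup M] (n : ℕ) :
    (∃ χ : G →* M, χ ^ n ≠ 1) ↔ ∃ ψ : Abelianization G →* M, ψ ^ n ≠ 1 := by
  constructor
  · rintro ⟨χ, hχ⟩
    refine ⟨Abelianization.lift χ, fun h => hχ (MonoidHom.ext fun g => ?_)⟩
    simpa using congr($h (Abelianization.of g))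
  · rintro ⟨ψ, hψ⟩
    refine ⟨ψ.comp Abelianization.of, fun h => hψ (Abelianization.hom_ext _ _ ?_)⟩
    ext g
    simpa using congr($h g)

variable {F : Type*} [Field F] [Fintype F]

lemma natCast_ne_zero_of_coprime_card {n : ℕ} (h : Nat.Coprime n (Fintype.card F)) :
    (n : F) ≠ 0 := by
  simpa using (Nat.isCoprime_iff_coprime.mpr h).map (Int.castRingHom F)

lemma hasEnoughRootsOfUnity_of_dvd_card_sub_one {n : ℕ} (hn : n ∣ Fintype.card F - 1) :
    HasEnoughRootsOfUnity F n := by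
  have : NeZero (Nat.card Fˣ) := ⟨Nat.card_pos.ne'⟩
  have : HasEnoughRootsOfUnity F (Nat.card Fˣ) :=
    { prim := by
        obtain ⟨g, hg⟩ := IsCyclic.exists_ofOrder_eq_natCard (α := Fˣ)
        exact ⟨g, IsPrimitiveRoot.coe_units_iff.mpr (hg ▸ IsPrimitiveRoot.orderOf g)⟩
      cyc := rootsOfUnity.isCyclic F _ }
  exact .of_dvd F (n := Nat.card Fˣ) (by rwa [Nat.card_units, Nat.card_eq_fintype_card])

lemma orderOf_apply_dvd_gcd {A : Type*} [Monoid A] (χ : A →* Fˣ) (a : A) :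
    orderOf (χ a) ∣ Nat.gcd (Monoid.exponent A) (Fintype.card F - 1) :=
  Nat.dvd_gcd ((orderOf_map_dvd χ a).trans (Monoid.order_dvd_exponent a))
    (by simpa [Nat.card_units, Nat.card_eq_fintype_card] using orderOf_dvd_natCard (χ a))

lemma three_le_gcd_of_sq_ne_one {A : Type*} [Monoid A] {χ : A →* Fˣ} (hχ : χ ^ 2 ≠ 1) :
    3 ≤ Nat.gcd (Monoid.exponent A) (Fintype.card F - 1) := by
  obtain ⟨a, ha⟩ : ∃ a, χ a ^ 2 ≠ 1 := by
    by_contra! h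
    exact hχ (MonoidHom.ext h)
  have hpos : 0 < Nat.gcd (Monoid.exponent A) (Fintype.card F - 1) :=
    Nat.gcd_pos_of_pos_right _ (Nat.sub_pos_of_lt Fintype.one_lt_card)
  by_contra! hlt
  refine ha (orderOf_dvd_iff_pow_eq_one.mp ((orderOf_apply_dvd_gcd χ a).trans ?_))
  interval_cases Nat.gcd (Monoid.exponent A) (Fintype.card F - 1) <;> norm_num

variable {A : Type*} [CommGroup A]

lemma exponent_quotient_range_powMonoidHom_dvd (m : ℕ) :
    Monoid.exponent (A ⧸ (powMonoidHom m : A →* A).range) ∣ m :=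
  Monoid.exponent_dvd_of_forall_pow_eq_one fun x => by
    obtain ⟨y, rfl⟩ := QuotientGroup.mk_surjective x
    rw [← QuotientGroup.mk_pow, QuotientGroup.eq_one_iff]
    exact ⟨y, rfl⟩

lemma dvd_of_pow_mem_range_powMonoidHom [Finite A] {a : A} (ha : orderOf a = Monoid.exponent A)
    {m k : ℕ} (hm : m ∣ Monoid.exponent A) (hmem : a ^ k ∈ (powMonoidHom m : A →* A).range) :
    m ∣ k := by
  obtain ⟨c, hc⟩ := hmem
  obtain ⟨d, hd⟩ := hm
  have hd0 : d ≠ 0 := by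
    rintro rfl
    exact Monoid.exponent_ne_zero_of_finite (by simpa using hd)
  have hdvd : orderOf a ∣ k * d := orderOf_dvd_of_pow_eq_one <| by
    rw [pow_mul, ← hc, powMonoidHom_apply, ← pow_mul, ← hd, Monoid.pow_exponent_eq_one]
  rw [ha, hd] at hdvd
  exact Nat.dvd_of_mul_dvd_mul_right (Nat.pos_of_ne_zero hd0) hdvd

lemma exists_sq_ne_one_of_three_le_gcd [Finite A]
    (h : 3 ≤ Nat.gcd (Monoid.exponent A) (Fintype.card F - 1)) : ∃ χ : A →* Fˣ, χ ^ 2 ≠ 1 := by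
  set m := Nat.gcd (Monoid.exponent A) (Fintype.card F - 1)
  set S := (powMonoidHom m : A →* A).range
  obtain ⟨a, ha⟩ := Monoid.exists_orderOf_eq_exponent (G := A) .of_finite
  have : HasEnoughRootsOfUnity F (Monoid.exponent (A ⧸ S)) :=
    hasEnoughRootsOfUnity_of_dvd_card_sub_one
      ((exponent_quotient_range_powMonoidHom_dvd m).trans (Nat.gcd_dvd_right _ _))
  have hsq : (a : A ⧸ S) ^ 2 ≠ 1 := by
    rw [← QuotientGroup.mk_pow, Ne, QuotientGroup.eq_one_iff]
    intro hmem
    have hm2 := Nat.le_of_dvd two_pos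
      (dvd_of_pow_mem_range_powMonoidHom ha (Nat.gcd_dvd_left _ _) hmem)
    omega
  obtain ⟨φ, hφ⟩ := CommGroup.exists_apply_ne_one_of_hasEnoughRootsOfUnity (A ⧸ S) F hsq
  refine ⟨φ.comp (QuotientGroup.mk' S), fun hφ2 => hφ ?_⟩
  simpa using congr($hφ2 a)

lemma exists_sq_ne_one_iff_three_le_gcd [Finite A] :
    (∃ χ : A →* Fˣ, χ ^ 2 ≠ 1) ↔ 3 ≤ Nat.gcd (Monoid.exponent A) (Fintype.card F - 1) :=
  ⟨fun ⟨_, hχ⟩ => three_le_gcd_of_sq_ne_one hχ, exists_sq_ne_one_of_three_le_gcd⟩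

end Characters

/-- There is a group code in `F_q[G]` with one-dimensional hull iff
`gcd(exp(G^{ab}), q-1) ≥ 3`. -/
theorem exists_code_one_dim_hull_iff (Fq : Type*) [Field Fq] [Fintype Fq] (G : Type*)
    [Group G] [Fintype G] (hco : Nat.Coprime (Fintype.card G) (Fintype.card Fq)) :
    (∃ C : TwoSidedIdeal (MonoidAlgebra Fq G), hullDim C = 1) ↔
      3 ≤ Nat.gcd (Monoid.exponent (Abelianization G)) (Fintype.card Fq - 1) := by
  rw [exists_hullDim_eq_one_iff (natCast_ne_zero_of_coprime_card hco),
    exists_pow_ne_one_iff_abelianization, exists_sq_ne_one_iff_three_le_gcd]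

end GroupCodeHulls
end

section
/- Let q ≥ 3 and n ≥ 1 be integers with q odd. If gcd(n, q²−1) > gcd(n, q−1) and gcd(n, q²−1) > gcd(n, q+1), then gcd(n, q²−1) > gcd(n, q−1) + gcd(n, q+1). -/
/-- Key numerical lemma for 2-dimensional hulls: for odd `q ≥ 3`, if `gcd(n, q²-1)`
exceeds both `gcd(n, q-1)` and `gcd(n, q+1)`, then it exceeds their sum. -/
theorem gcd_q_sq_lemma (q n : ℕ) (hq : 3 ≤ q) (hodd : Odd q) (hn : 1 ≤ n)
    (h1 : Nat.gcd n (q ^ 2 - 1) > Nat.gcd n (q - 1))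
    (h2 : Nat.gcd n (q ^ 2 - 1) > Nat.gcd n (q + 1)) :
    Nat.gcd n (q ^ 2 - 1) > Nat.gcd n (q - 1) + Nat.gcd n (q + 1) := by
  obtain ⟨k, rfl⟩ : ∃ k, q = k + 1 := ⟨q - 1, by omega⟩
  have hk : 2 ≤ k := by omega
  have hkeven : 2 ∣ k := by
    obtain ⟨m, hm⟩ := hodd; omega
  have hsq : (k + 1) ^ 2 - 1 = k * (k + 2) := by
    have : (k + 1) ^ 2 = k * (k + 2) + 1 := by ring
    omega
  simp only [Nat.add_sub_cancel] at h1 ⊢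
  set a := Nat.gcd n k with haa
  set b := Nat.gcd n (k + 1 + 1) with hbb
  set g := Nat.gcd n ((k + 1) ^ 2 - 1) with hgg
  have hb' : k + 1 + 1 = k + 2 := by ring
  have ha : a ∣ g := Nat.dvd_gcd (Nat.gcd_dvd_left _ _)
    (by rw [hsq]; exact (Nat.gcd_dvd_right n k).mul_right _)
  have hb : b ∣ g := Nat.dvd_gcd (Nat.gcd_dvd_left _ _)
    (by rw [hsq, hb'] at *; exact (Nat.gcd_dvd_right n (k + 2)).mul_left _)
  have hapos : 0 < a := Nat.gcd_pos_of_pos_left _ hn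
  have hbpos : 0 < b := Nat.gcd_pos_of_pos_left _ hn
  have h2a : 2 * a ≤ g := by
    obtain ⟨c, hc⟩ := ha
    have : 2 ≤ c := by nlinarith
    nlinarith
  have h2b : 2 * b ≤ g := by
    obtain ⟨c, hc⟩ := hb
    have : 2 ≤ c := by nlinarith
    nlinarith
  by_contra hcon
  push_neg at hcon
  have heq : g = a + b := by omega
  have hab : a ∣ b := (Nat.dvd_add_right (dvd_refl a)).mp (heq ▸ ha)
  have hba : b ∣ a := (Nat.dvd_add_left (dvd_refl b)).mp (heq ▸ hb)
  have habe : a = b := Nat.dvd_antisymm hab hba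
  have hak : a ∣ k := Nat.gcd_dvd_right _ _
  have hak2 : a ∣ k + 2 := by rw [habe, hbb, hb']; exact Nat.gcd_dvd_right _ _
  have ha2 : a ∣ 2 := by
    have := Nat.dvd_sub hak2 hak
    simpa using this
  have hgn : g ∣ n := Nat.gcd_dvd_left _ _
  have haor : a = 1 ∨ a = 2 := by
    have := Nat.le_of_dvd (by norm_num) ha2
    interval_cases a <;> omega
  rcases haor with ha1 | ha1
  · -- a = 1, g = 2
    have h2n : 2 ∣ n := by
      have hg2 : g = 2 := by omega
      exact hg2 ▸ hgn
    have : 2 ∣ Nat.gcd n k := Nat.dvd_gcd h2n hkeven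
    omega
  · -- a = 2, g = 4
    have h4n : 4 ∣ n := by
      have hg4 : g = 4 := by omega
      exact hg4 ▸ hgn
    rcases (by omega : 4 ∣ k ∨ 4 ∣ k + 2) with h4 | h4
    · have : 4 ∣ Nat.gcd n k := Nat.dvd_gcd h4n h4
      omega
    · have : 4 ∣ Nat.gcd n (k + 1 + 1) := Nat.dvd_gcd h4n (by omega)
      omega
end

section
/- Let q and n be positive integers. If gcd(n, q³−1) > gcd(n, q−1), then gcd(n, q³−1) ≥ 3·gcd(n, q−1); moreover gcd(q³−1, q+1) divides 2. -/
/-- Key numerical lemma for 3-dimensional hulls: if `gcd(n, q³-1) > gcd(n, q-1)` then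
`gcd(n, q³-1) ≥ 3·gcd(n, q-1)`; moreover `gcd(q³-1, q+1)` divides `2`. -/
theorem gcd_q_cube_lemma (q n : ℕ) (hq : 0 < q) (hn : 0 < n)
    (h : Nat.gcd n (q ^ 3 - 1) > Nat.gcd n (q - 1)) :
    3 * Nat.gcd n (q - 1) ≤ Nat.gcd n (q ^ 3 - 1) ∧ Nat.gcd (q ^ 3 - 1) (q + 1) ∣ 2 := by
  obtain ⟨m, rfl⟩ : ∃ m, q = m + 1 := ⟨q - 1, by omega⟩
  have key : (m + 1) ^ 3 - 1 = (m ^ 2 + 3 * m + 3) * m := by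
    have : (m + 1) ^ 3 = (m ^ 2 + 3 * m + 3) * m + 1 := by ring
    omega
  have hsub : m + 1 - 1 = m := by omega
  rw [key, hsub] at h ⊢
  set a := Nat.gcd n m with ha
  set b := Nat.gcd n ((m ^ 2 + 3 * m + 3) * m) with hb
  have hapos : 0 < a := Nat.gcd_pos_of_pos_left _ hn
  have hab : a ∣ b :=
    Nat.dvd_gcd (Nat.gcd_dvd_left _ _) ((Nat.gcd_dvd_right _ _).trans (dvd_mul_left _ _))
  have hbdvd : b ∣ (m ^ 2 + 3 * m + 3) * a := by
    rw [ha, ← Nat.gcd_mul_left]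
    exact Nat.dvd_gcd (dvd_mul_of_dvd_right (Nat.gcd_dvd_left _ _) _) (Nat.gcd_dvd_right _ _)
  obtain ⟨k, hk⟩ := hab
  have hkdvd : k ∣ m ^ 2 + 3 * m + 3 := by
    have : a * k ∣ a * (m ^ 2 + 3 * m + 3) := by
      rw [← hk, mul_comm a]; exact hbdvd
    exact (mul_dvd_mul_iff_left hapos.ne').mp this
  have hm2 : m ^ 2 % 2 = (m % 2) ^ 2 % 2 := Nat.pow_mod m 2 2
  have hodd : ¬ 2 ∣ (m ^ 2 + 3 * m + 3) := by
    rcases Nat.mod_two_eq_zero_or_one m with hm | hm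
    · rw [hm] at hm2; norm_num at hm2; omega
    · rw [hm] at hm2; norm_num at hm2; omega
  have hk3 : 3 ≤ k := by
    rcases k with _ | _ | _ | k
    · simp at hk; omega
    · simp at hk; omega
    · exact absurd hkdvd hodd
    · omega
  constructor
  · rw [hk, mul_comm a k]
    exact Nat.mul_le_mul_right a hk3
  · -- gcd ((m^2+3m+3)*m) (m+2) divides 2
    have h1 : Nat.gcd ((m ^ 2 + 3 * m + 3) * m) (m + 1 + 1) ∣ (m ^ 2 + 3 * m + 3) * m :=
      Nat.gcd_dvd_left _ _
    have h2 : Nat.gcd ((m ^ 2 + 3 * m + 3) * m) (m + 1 + 1) ∣ (m + 1) ^ 3 + 1 := by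
      have : m + 1 + 1 ∣ (m + 1) ^ 3 + 1 := ⟨m ^ 2 + m + 1, by ring⟩
      exact (Nat.gcd_dvd_right _ _).trans this
    have := Nat.dvd_sub h2 h1
    have heq : (m + 1) ^ 3 + 1 - (m ^ 2 + 3 * m + 3) * m = 2 := by
      have : (m + 1) ^ 3 = (m ^ 2 + 3 * m + 3) * m + 1 := by ring
      omega
    rwa [heq] at this
end
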